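/- (Gagliardo–Nirenberg inequality on the torus.) There exists a constant C > 0 such that for every 2π-periodic continuously differentiable function u : ℝ → ℂ, ‖u‖_{L⁴}⁴ ≤ C·‖u‖_{H¹}·‖u‖_{L²}³. -/

import Mathlib

/-- The `L²` norm of a `2π`-periodic function:
`‖u‖_{L²} = ((1/2π) ∫₀^{2π} |u(x)|² dx)^{1/2}`. -/
noncomputable def L2norm (u : ℝ → ℂ) : ℝ :=
  Real.sqrt ((1 / (2 * Real.pi)) * ∫ x in (0:ℝ)..(2 * Real.pi), ‖u x‖ ^ 2)

/-- The `H¹` norm of a `2π`-periodic continuously differentiable function: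
`‖u‖_{H¹} = (‖u‖_{L²}² + ‖u'‖_{L²}²)^{1/2}`. -/
noncomputable def H1norm (u : ℝ → ℂ) : ℝ :=
  Real.sqrt (L2norm u ^ 2 + L2norm (deriv u) ^ 2)

/-- The `L⁴` norm: `‖u‖_{L⁴} = ((1/2π) ∫₀^{2π} |u(x)|⁴ dx)^{1/4}`. -/
noncomputable def L4norm (u : ℝ → ℂ) : ℝ :=
  ((1 / (2 * Real.pi)) * ∫ x in (0:ℝ)..(2 * Real.pi), ‖u x‖ ^ 4) ^ ((1:ℝ) / 4)

/-!
On an interval `[a, b]`, the function `|u|²` exceeds its mean by at most its total variation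
`∫ |(|u|²)'| ≤ 2 ∫ |u| |u'|`, which Cauchy–Schwarz bounds by `2 ‖u‖₂ ‖u'‖₂`. Hence
`∫ |u|⁴ ≤ sup |u|² · ∫ |u|² ≤ (mean |u|² + 2 ‖u‖₂ ‖u'‖₂) ∫ |u|²`, which in the normalized norms on
`[0, 2π]` reads `‖u‖_{L⁴}⁴ ≤ (‖u‖_{L²} + 4π ‖u'‖_{L²}) ‖u‖_{L²}³ ≤ (1 + 4π) ‖u‖_{H¹} ‖u‖_{L²}³`.
-/

open MeasureTheory Set intervalIntegral Real

section Interval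

variable {a b : ℝ}

theorem integral_mul_le_sqrt_mul_sqrt {f g : ℝ → ℝ} (hab : a ≤ b) (hf : Continuous f)
    (hg : Continuous g) (hf0 : 0 ≤ f) (hg0 : 0 ≤ g) :
    ∫ x in a..b, f x * g x ≤ √(∫ x in a..b, f x ^ 2) * √(∫ x in a..b, g x ^ 2) := by
  have memLp_two {h : ℝ → ℝ} (hh : Continuous h) :
      MemLp h (ENNReal.ofReal 2) (volume.restrict (Ioc a b)) := by
    rw [ENNReal.ofReal_ofNat, memLp_two_iff_integrable_sq hh.aestronglyMeasurable]
    exact (hh.pow 2).integrableOn_Ioc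
  simpa only [integral_of_le hab, sqrt_eq_rpow, rpow_two] using
    integral_mul_le_Lp_mul_Lq_of_nonneg Real.HolderConjugate.two_two
      (ae_of_all _ hf0) (ae_of_all _ hg0) (memLp_two hf) (memLp_two hg)

theorem sub_le_integral_abs_deriv {g g' : ℝ → ℝ} (hg : ∀ x, HasDerivAt g (g' x) x)
    (hg' : Continuous g') {x y : ℝ} (hx : x ∈ Icc a b) (hy : y ∈ Icc a b) :
    g x - g y ≤ ∫ t in a..b, |g' t| := by
  have hsub : uIoc y x ⊆ uIoc a b := by
    apply uIoc_subset_uIoc_of_uIcc_subset_uIcc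
    rw [uIcc_of_le (hx.1.trans hx.2)]
    exact uIcc_subset_Icc hy hx
  calc g x - g y = ∫ t in y..x, g' t :=
        (integral_eq_sub_of_hasDerivAt (fun t _ => hg t) (hg'.intervalIntegrable _ _)).symm
    _ ≤ |∫ t in y..x, (|g' t|)| :=
        (le_abs_self _).trans (norm_integral_le_abs_integral_norm (f := g'))
    _ ≤ |∫ t in a..b, (|g' t|)| :=
        abs_integral_mono_interval hsub (ae_of_all _ fun t => abs_nonneg _)
          (hg'.abs.intervalIntegrable _ _)
    _ = ∫ t in a..b, |g' t| :=
        abs_of_nonneg (integral_nonneg (hx.1.trans hx.2) fun t _ => abs_nonneg _)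

theorem le_mean_add_integral_abs_deriv {g g' : ℝ → ℝ} (hab : a < b)
    (hg : ∀ x, HasDerivAt g (g' x) x) (hg' : Continuous g') {x : ℝ} (hx : x ∈ Icc a b) :
    g x ≤ (∫ y in a..b, g y) / (b - a) + ∫ t in a..b, |g' t| := by
  have hgc : Continuous g := continuous_iff_continuousAt.2 fun x => (hg x).continuousAt
  have hmean : ∫ _ in a..b, (g x - ∫ t in a..b, |g' t|) ≤ ∫ y in a..b, g y :=
    integral_mono_on hab.le intervalIntegrable_const (hgc.intervalIntegrable _ _)
      fun y hy => by linarith [sub_le_integral_abs_deriv hg hg' hx hy]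
  rw [intervalIntegral.integral_const, smul_eq_mul] at hmean
  rw [← sub_le_iff_le_add, le_div_iff₀ (sub_pos.2 hab)]
  linarith

variable {E : Type*} [NormedAddCommGroup E] [InnerProductSpace ℝ E] {u : ℝ → E}

theorem sq_norm_le_of_contDiff (hu : ContDiff ℝ 1 u) (hab : a < b) {x : ℝ} (hx : x ∈ Icc a b) :
    ‖u x‖ ^ 2 ≤ (∫ y in a..b, ‖u y‖ ^ 2) / (b - a) +
      2 * (√(∫ y in a..b, ‖u y‖ ^ 2) * √(∫ y in a..b, ‖deriv u y‖ ^ 2)) := by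
  have hu₀ : Continuous u := hu.continuous
  have hu₁ : Continuous (deriv u) := hu.continuous_deriv le_rfl
  have hderiv (y : ℝ) : HasDerivAt (‖u ·‖ ^ 2) (2 * inner ℝ (u y) (deriv u y)) y :=
    ((hu.differentiable one_ne_zero y).hasDerivAt).norm_sq
  have hvar : ∫ t in a..b, |2 * inner ℝ (u t) (deriv u t)| ≤
      2 * ∫ t in a..b, ‖u t‖ * ‖deriv u t‖ := by
    rw [← intervalIntegral.integral_const_mul]
    refine integral_mono_on hab.le
      ((continuous_const.mul (hu₀.inner hu₁)).abs.intervalIntegrable _ _)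
      ((continuous_const.mul (hu₀.norm.mul hu₁.norm)).intervalIntegrable _ _) fun t _ => ?_
    rw [abs_mul, abs_two]
    gcongr
    exact abs_real_inner_le_norm _ _
  have hCS := integral_mul_le_sqrt_mul_sqrt hab.le hu₀.norm hu₁.norm
    (fun _ => norm_nonneg _) (fun _ => norm_nonneg _)
  have := le_mean_add_integral_abs_deriv hab hderiv (continuous_const.mul (hu₀.inner hu₁)) hx
  linarith

theorem integral_norm_pow_four_le (hu : ContDiff ℝ 1 u) (hab : a < b) :
    ∫ x in a..b, ‖u x‖ ^ 4 ≤ ((∫ y in a..b, ‖u y‖ ^ 2) / (b - a) +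
      2 * (√(∫ y in a..b, ‖u y‖ ^ 2) * √(∫ y in a..b, ‖deriv u y‖ ^ 2))) *
        ∫ y in a..b, ‖u y‖ ^ 2 := by
  have hu₀ : Continuous u := hu.continuous
  rw [← intervalIntegral.integral_const_mul]
  refine integral_mono_on hab.le ((hu₀.norm.pow 4).intervalIntegrable _ _)
    ((continuous_const.mul (hu₀.norm.pow 2)).intervalIntegrable _ _) fun x hx => ?_
  rw [show ‖u x‖ ^ 4 = ‖u x‖ ^ 2 * ‖u x‖ ^ 2 by ring]
  exact mul_le_mul_of_nonneg_right (sq_norm_le_of_contDiff hu hab hx) (sq_nonneg _)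
end Interval

theorem L2norm_nonneg (u : ℝ → ℂ) : 0 ≤ L2norm u := sqrt_nonneg _

theorem integral_sq_norm_eq (u : ℝ → ℂ) :
    ∫ x in (0 : ℝ)..2 * π, ‖u x‖ ^ 2 = 2 * π * L2norm u ^ 2 := by
  have : 0 ≤ ∫ x in (0 : ℝ)..2 * π, ‖u x‖ ^ 2 :=
    integral_nonneg two_pi_pos.le fun _ _ => sq_nonneg _
  rw [L2norm, sq_sqrt (by positivity)]
  field_simp

theorem sqrt_integral_sq_norm_eq (u : ℝ → ℂ) :
    √(∫ x in (0 : ℝ)..2 * π, ‖u x‖ ^ 2) = √(2 * π) * L2norm u := by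
  rw [integral_sq_norm_eq, sqrt_mul two_pi_pos.le, sqrt_sq (L2norm_nonneg u)]

theorem L4norm_pow_four (u : ℝ → ℂ) :
    L4norm u ^ 4 = (∫ x in (0 : ℝ)..2 * π, ‖u x‖ ^ 4) / (2 * π) := by
  have : 0 ≤ ∫ x in (0 : ℝ)..2 * π, ‖u x‖ ^ 4 :=
    integral_nonneg two_pi_pos.le fun _ _ => by positivity
  rw [L4norm, ← rpow_natCast, ← rpow_mul (by positivity)]
  norm_num
  ring

theorem L2norm_le_H1norm (u : ℝ → ℂ) : L2norm u ≤ H1norm u :=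
  le_sqrt_of_sq_le (le_add_of_nonneg_right (sq_nonneg _))

theorem L2norm_deriv_le_H1norm (u : ℝ → ℂ) : L2norm (deriv u) ≤ H1norm u :=
  le_sqrt_of_sq_le (le_add_of_nonneg_left (sq_nonneg _))

/-- **Gagliardo–Nirenberg inequality on the torus.** There is a constant
`C > 0` such that every `2π`-periodic `C¹` function `u` satisfies
`‖u‖_{L⁴}⁴ ≤ C·‖u‖_{H¹}·‖u‖_{L²}³`. -/
theorem stmt7 :
    ∃ C : ℝ, 0 < C ∧
      ∀ u : ℝ → ℂ, (∀ x, u (x + 2 * Real.pi) = u x) → ContDiff ℝ 1 u →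
        L4norm u ^ 4 ≤ C * H1norm u * L2norm u ^ 3 := by
  refine ⟨1 + 4 * π, by positivity, fun u _ hu => ?_⟩
  have key := integral_norm_pow_four_le hu two_pi_pos
  rw [sub_zero, sqrt_integral_sq_norm_eq, sqrt_integral_sq_norm_eq (deriv u),
    integral_sq_norm_eq] at key
  rw [L4norm_pow_four, div_le_iff₀ two_pi_pos]
  have hs : √(2 * π) * L2norm u * (√(2 * π) * L2norm (deriv u)) =
      2 * π * (L2norm u * L2norm (deriv u)) := by
    rw [mul_mul_mul_comm, mul_self_sqrt two_pi_pos.le]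
  have hmean : 2 * π * L2norm u ^ 2 / (2 * π) = L2norm u ^ 2 := by field_simp
  rw [hs, hmean] at key
  have ha := L2norm_nonneg u
  have hb : L2norm u + 4 * π * L2norm (deriv u) ≤ (1 + 4 * π) * H1norm u := by
    nlinarith [L2norm_le_H1norm u, L2norm_deriv_le_H1norm u, pi_pos]
  calc _ ≤ _ := key
    _ = (L2norm u + 4 * π * L2norm (deriv u)) * L2norm u ^ 3 * (2 * π) := by ring
    _ ≤ _ := by gcongr
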